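/- Let X be an R^n-valued random vector whose covariance matrix V is symmetric positive semidefinite of rank m−1 < n, with eigenvalues λ₁ ≥ … ≥ λ_{m−1} > 0 = λ_m = … = λₙ and spectral decomposition V = T diag(λ₁,…,λₙ) Tᵀ. Let C = diag(λ₁⁻¹,…,λ_{m−1}⁻¹, 0,…,0). Then for every ε > 0, P((X − μ)ᵀ T C Tᵀ (X − μ) < ε) ≥ 1 − (m−1)/ε. -/

import Mathlib

/-!
Markov's inequality applied to the nonnegative quadratic form `Q = (X - μ)ᵀ T C Tᵀ (X - μ)`.
Its expectation is `tr (T C Tᵀ V) = tr (C Λ)` because `Tᵀ T = 1`, and `C Λ` is the diagonal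
projection onto the first `m - 1` coordinates, so `E Q ≤ m - 1` and `P (Q ≥ ε) ≤ (m - 1) / ε`.
-/

open MeasureTheory Matrix

section QuadraticForm

variable {Ω ι : Type*} [MeasurableSpace Ω] {P : Measure Ω} [Fintype ι]

lemma integrable_sub_mul_sub [IsFiniteMeasure P] {f g : Ω → ℝ} (hf : Integrable f P)
    (hg : Integrable g P) (hfg : Integrable (fun ω => f ω * g ω) P) (a b : ℝ) :
    Integrable (fun ω => (f ω - a) * (g ω - b)) P := by
  have h : (fun ω => (f ω - a) * (g ω - b))
      = fun ω => f ω * g ω - b * f ω - a * g ω + a * b := by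
    funext ω; ring
  rw [h]
  exact ((hfg.sub (hf.const_mul b)).sub (hg.const_mul a)).add (integrable_const _)

lemma dotProduct_mulVec_eq_sum (M : Matrix ι ι ℝ) (y : ι → ℝ) :
    y ⬝ᵥ (M *ᵥ y) = ∑ i, ∑ j, M i j * (y j * y i) := by
  simp only [dotProduct, mulVec, Finset.mul_sum]
  exact Finset.sum_congr rfl fun i _ => Finset.sum_congr rfl fun j _ => by ring

variable {Y : Ω → ι → ℝ}

lemma integrable_dotProduct_mulVec (hY : ∀ i j, Integrable (fun ω => Y ω i * Y ω j) P)
    (M : Matrix ι ι ℝ) :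
    Integrable (fun ω => Y ω ⬝ᵥ (M *ᵥ Y ω)) P := by
  simp only [dotProduct_mulVec_eq_sum]
  exact integrable_finsetSum _ fun i _ =>
    integrable_finsetSum _ fun j _ => (hY j i).const_mul (M i j)

lemma integral_dotProduct_mulVec (hY : ∀ i j, Integrable (fun ω => Y ω i * Y ω j) P)
    (M : Matrix ι ι ℝ) :
    ∫ ω, Y ω ⬝ᵥ (M *ᵥ Y ω) ∂P = trace (M * of fun i j => ∫ ω, Y ω i * Y ω j ∂P) := by
  simp only [dotProduct_mulVec_eq_sum, trace, diag, mul_apply, of_apply]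
  rw [integral_finsetSum _ fun i _ =>
    integrable_finsetSum _ fun j _ => (hY j i).const_mul (M i j)]
  refine Finset.sum_congr rfl fun i _ => ?_
  rw [integral_finsetSum _ fun j _ => (hY j i).const_mul (M i j)]
  exact Finset.sum_congr rfl fun j _ => integral_const_mul _ _

end QuadraticForm

lemma trace_conj_mul_conj {ι R : Type*} [Fintype ι] [DecidableEq ι] [CommSemiring R]
    {T : Matrix ι ι R} (hT : Tᵀ * T = 1) (A B : Matrix ι ι R) :
    trace (T * A * Tᵀ * (T * B * Tᵀ)) = trace (A * B) := by
  have h : T * A * Tᵀ * (T * B * Tᵀ) = T * (A * B * Tᵀ) := by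
    simp only [Matrix.mul_assoc]
    rw [← Matrix.mul_assoc Tᵀ T, hT, Matrix.one_mul]
  rw [h, trace_mul_comm, Matrix.mul_assoc, Matrix.mul_assoc, hT, Matrix.mul_one]

lemma trace_truncatedInv_mul_diagonal {n : ℕ} (k : ℕ) {lam : Fin n → ℝ}
    (hpos : ∀ i : Fin n, i.val < k → 0 < lam i) :
    trace (diagonal (fun i : Fin n => if i.val < k then (lam i)⁻¹ else 0) * diagonal lam)
      = min n k := by
  have h : ∀ i : Fin n, (if i.val < k then (lam i)⁻¹ else 0) * lam i
      = if i.val < k then 1 else 0 := by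
    intro i
    split_ifs with hi
    · exact inv_mul_cancel₀ (hpos i hi).ne'
    · exact zero_mul _
  rw [diagonal_mul_diagonal, trace_diagonal, Finset.sum_congr rfl fun i _ => h i,
    Finset.sum_boole, Fin.card_filter_val_lt]

lemma one_sub_div_le_measure_lt {Ω : Type*} [MeasurableSpace Ω] {P : Measure Ω}
    [IsProbabilityMeasure P] {Q : Ω → ℝ} (hQ : 0 ≤ Q) (hQi : Integrable Q P) {c ε : ℝ}
    (hc : ∫ ω, Q ω ∂P ≤ c) (hε : 0 < ε) :
    1 - c / ε ≤ (P {ω | Q ω < ε}).toReal := by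
  have hmarkov : ε * (P {ω | ε ≤ Q ω}).toReal ≤ c :=
    (mul_meas_ge_le_integral_of_nonneg (.of_forall hQ) hQi ε).trans hc
  have hcompl : {ω | Q ω < ε} = {ω | ε ≤ Q ω}ᶜ := by
    ext ω; simp
  have hmeas : NullMeasurableSet {ω | ε ≤ Q ω} P :=
    hQi.aemeasurable.nullMeasurable measurableSet_Ici
  rw [hcompl, prob_compl_eq_one_sub₀ hmeas,
    ENNReal.toReal_sub_of_le prob_le_one ENNReal.one_ne_top, ENNReal.toReal_one,
    sub_le_sub_iff_left, le_div_iff₀ hε, mul_comm]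
  exact hmarkov

theorem multivariate_chebyshev_singular_general {Ω : Type*} [MeasurableSpace Ω] (P : Measure Ω)
    [IsProbabilityMeasure P] (n m : ℕ) (hm2 : 2 ≤ m)
    (X : Ω → Fin n → ℝ)
    (hX : ∀ i, Integrable (fun ω => X ω i) P)
    (hX2 : ∀ i j, Integrable (fun ω => X ω i * X ω j) P)
    (μ : Fin n → ℝ)
    (V : Matrix (Fin n) (Fin n) ℝ)
    (hV : ∀ i j, V i j = ∫ ω, (X ω i - μ i) * (X ω j - μ j) ∂P)
    (lam : Fin n → ℝ)
    (hpos : ∀ i : Fin n, i.val < m - 1 → 0 < lam i)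
    (T : Matrix (Fin n) (Fin n) ℝ) (hT : Tᵀ * T = 1)
    (hdecomp : V = T * Matrix.diagonal lam * Tᵀ)
    (C : Matrix (Fin n) (Fin n) ℝ)
    (hC : C = Matrix.diagonal fun i => if i.val < m - 1 then (lam i)⁻¹ else 0) :
    ∀ ε : ℝ, 0 < ε →
      1 - (m - 1 : ℝ) / ε ≤
        (P {ω | (X ω - μ) ⬝ᵥ ((T * C * Tᵀ) *ᵥ (X ω - μ)) < ε}).toReal := by
  intro ε hε
  have hcentered : ∀ i j, Integrable (fun ω => (X ω - μ) i * (X ω - μ) j) P :=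
    fun i j => integrable_sub_mul_sub (hX i) (hX j) (hX2 i j) (μ i) (μ j)
  have hC_psd : (T * C * Tᵀ).PosSemidef := by
    rw [← conjTranspose_eq_transpose_of_trivial, hC]
    refine PosSemidef.mul_mul_conjTranspose_same (posSemidef_diagonal_iff.mpr fun i => ?_) T
    split_ifs with hi
    exacts [inv_nonneg.mpr (hpos i hi).le, le_rfl]
  have hV_eq : (of fun i j => ∫ ω, (X ω - μ) i * (X ω - μ) j ∂P) = V :=
    ext fun i j => (hV i j).symm
  have hexpectation : ∫ ω, (X ω - μ) ⬝ᵥ ((T * C * Tᵀ) *ᵥ (X ω - μ)) ∂P ≤ (m - 1 : ℝ) := by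
    rw [integral_dotProduct_mulVec hcentered, hV_eq, hdecomp, trace_conj_mul_conj hT, hC,
      trace_truncatedInv_mul_diagonal _ hpos, ← Nat.cast_pred (by omega)]
    exact_mod_cast min_le_right n (m - 1)
  exact one_sub_div_le_measure_lt (fun ω => hC_psd.dotProduct_mulVec_nonneg (X ω - μ))
    (integrable_dotProduct_mulVec hcentered _) hexpectation hε

theorem multivariate_chebyshev_singular {Ω : Type*} [MeasurableSpace Ω] (P : Measure Ω)
    [IsProbabilityMeasure P] (n m : ℕ) (hm2 : 2 ≤ m) (hmn : m ≤ n)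
    (X : Ω → Fin n → ℝ)
    (hX : ∀ i, Integrable (fun ω => X ω i) P)
    (hX2 : ∀ i j, Integrable (fun ω => X ω i * X ω j) P)
    (μ : Fin n → ℝ) (hμ : ∀ i, μ i = ∫ ω, X ω i ∂P)
    (V : Matrix (Fin n) (Fin n) ℝ)
    (hV : ∀ i j, V i j = ∫ ω, (X ω i - μ i) * (X ω j - μ j) ∂P)
    (lam : Fin n → ℝ) (hmono : ∀ i j : Fin n, i ≤ j → lam j ≤ lam i)
    (hpos : ∀ i : Fin n, i.val < m - 1 → 0 < lam i)
    (hzero : ∀ i : Fin n, m - 1 ≤ i.val → lam i = 0)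
    (T : Matrix (Fin n) (Fin n) ℝ) (hT : Tᵀ * T = 1)
    (hdecomp : V = T * Matrix.diagonal lam * Tᵀ)
    (C : Matrix (Fin n) (Fin n) ℝ)
    (hC : C = Matrix.diagonal fun i => if i.val < m - 1 then (lam i)⁻¹ else 0) :
    ∀ ε : ℝ, 0 < ε →
      1 - (m - 1 : ℝ) / ε ≤
        (P {ω | (X ω - μ) ⬝ᵥ ((T * C * Tᵀ) *ᵥ (X ω - μ)) < ε}).toReal :=
  multivariate_chebyshev_singular_general P n m hm2 X hX hX2 μ V hV lam hpos T hT hdecomp C hC
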